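/- arXiv:1703.07953 — 5 statements merged into one kernel-verified Lean document; each statement's English description precedes it below -/
import Mathlib

section
/- Let A be a unital C*-algebra and F a set of nondegenerate representations of A. Then F is strictly norming (for every a ∈ A there exists φ ∈ F with ‖φ(a)‖ = ‖a‖) if and only if F is strictly spectral (for every a ∈ A, a is invertible in A if and only if φ(a) is invertible for all φ ∈ F). -/
lemma aux_mem_spec_sub {A : Type*} [Ring A] [Algebra ℝ A] (c : A) (r y : ℝ) :
    y ∈ spectrum ℝ (algebraMap ℝ A r - c) ↔ r - y ∈ spectrum ℝ c := by
  simp only [spectrum.mem_iff, map_sub]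
  rw [show algebraMap ℝ A r - algebraMap ℝ A y - c
      = -(algebraMap ℝ A y - (algebraMap ℝ A r - c)) by abel, IsUnit.neg_iff]

/-- For a set `F` of nondegenerate (here: unital) representations of a unital C*-algebra
`A`, `F` is strictly norming (every `a ∈ A` has its norm attained by some `φ ∈ F`) if and
only if `F` is strictly spectral (`a` is invertible iff `φ a` is invertible for all
`φ ∈ F`). -/
theorem strictlyNorming_iff_strictlySpectral
    (A : Type) [CStarAlgebra A] [Nontrivial A]
    {ι : Type} (H : ι → Type)
    [∀ i, NormedAddCommGroup (H i)] [∀ i, InnerProductSpace ℂ (H i)]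
    [∀ i, CompleteSpace (H i)]
    (φ : ∀ i, A →⋆ₐ[ℂ] (H i →L[ℂ] H i)) :
    (∀ a : A, ∃ i, ‖φ i a‖ = ‖a‖) ↔ (∀ a : A, IsUnit a ↔ ∀ i, IsUnit (φ i a)) := by
  have hcomm : ∀ (i : ι) (r : ℝ),
      φ i (algebraMap ℝ A r) = algebraMap ℝ (H i →L[ℂ] H i) r :=
    fun i r => ((φ i).toAlgHom.restrictScalars ℝ).commutes r
  constructor
  · intro hnorm a
    constructor
    · intro ha i
      exact ha.map (φ i)
    · intro h
      by_contra hna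
      -- key: a nonneg-spectrum selfadjoint non-unit is mapped to a non-unit by some φ i
      have key : ∀ c : A, (∀ x ∈ spectrum ℝ c, 0 ≤ x) → IsSelfAdjoint c → ¬ IsUnit c →
          ∃ i, ¬ IsUnit (φ i c) := by
        intro c hcspec hcsa hcu
        by_cases hc0 : c = 0
        · obtain ⟨i, hi⟩ := hnorm 1
          refine ⟨i, ?_⟩
          subst hc0
          rw [map_zero, isUnit_zero_iff]
          intro h01
          rw [map_one] at hi
          have h1 : ‖(1 : A)‖ = 1 := norm_one
          rw [← h01, norm_zero] at hi
          rw [← hi] at h1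
          norm_num at h1
        · have hr : 0 < ‖c‖ := norm_pos_iff.mpr hc0
          set r := ‖c‖ with hrdef
          set b := algebraMap ℝ A r - c with hb
          have hbsa : IsSelfAdjoint b :=
            (IsSelfAdjoint.algebraMap A (IsSelfAdjoint.all r)).sub hcsa
          have hmemb : ∀ y : ℝ, y ∈ spectrum ℝ b ↔ r - y ∈ spectrum ℝ c :=
            aux_mem_spec_sub c r
          have hbspec : ∀ y ∈ spectrum ℝ b, 0 ≤ y ∧ y ≤ r := by
            intro y hy
            have h1 := hcspec _ ((hmemb y).1 hy)
            have h2 : ‖r - y‖ ≤ ‖c‖ := spectrum.norm_le_norm_of_mem ((hmemb y).1 hy)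
            rw [Real.norm_eq_abs, abs_le] at h2
            constructor <;> [linarith [h2.1]; linarith]
          have hbnorm : ‖b‖ = r := by
            apply le_antisymm
            · have hbcfc : b = cfc (fun x : ℝ => r - x) c := by
                rw [cfc_sub _ _ c, cfc_const r c, cfc_id' ℝ c]
              rw [hbcfc]
              refine norm_cfc_le hr.le fun x hx => ?_
              have h1 := hcspec x hx
              have h2 : ‖x‖ ≤ ‖c‖ := spectrum.norm_le_norm_of_mem hx
              rw [Real.norm_eq_abs] at h2 ⊢
              rw [abs_le] at h2 ⊢
              constructor <;> [linarith; linarith]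
            · have h0c : (0 : ℝ) ∈ spectrum ℝ c := (spectrum.zero_mem_iff (R := ℝ)).mpr hcu
              have : r ∈ spectrum ℝ b := (hmemb r).2 (by simpa using h0c)
              have := spectrum.norm_le_norm_of_mem this
              rwa [Real.norm_eq_abs, abs_of_pos hr] at this
          obtain ⟨i, hi⟩ := hnorm b
          refine ⟨i, fun hu => ?_⟩
          have hφb : ‖φ i b‖ = r := hi.trans hbnorm
          have hφbne : φ i b ≠ 0 := by
            intro h; rw [h, norm_zero] at hφb; exact hr.ne hφb
          haveI : Nontrivial (H i →L[ℂ] H i) := nontrivial_of_ne _ _ hφbne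
          have hφbsa : IsSelfAdjoint (φ i b) := hbsa.map (φ i)
          have hspecsub : spectrum ℝ (φ i b) ⊆ spectrum ℝ b :=
            AlgHom.spectrum_apply_subset ((φ i).toAlgHom.restrictScalars ℝ) b
          have hrmem : r ∈ spectrum ℝ (φ i b) := by
            rcases CStarAlgebra.norm_or_neg_norm_mem_spectrum hφbsa with hmem | hmem
            · rwa [hφb] at hmem
            · exfalso
              rw [hφb] at hmem
              have := (hbspec _ (hspecsub hmem)).1
              linarith
          have hφbc : φ i b = algebraMap ℝ (H i →L[ℂ] H i) r - φ i c := by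
            rw [hb, map_sub, hcomm]
          rw [hφbc] at hrmem
          have h0 : (0 : ℝ) ∈ spectrum ℝ (φ i c) := by
            have := (aux_mem_spec_sub (φ i c) r r).1 hrmem
            simpa using this
          exact (spectrum.zero_mem_iff (R := ℝ)).mp h0 hu
      have h2 : ¬ IsUnit (star a * a) ∨ ¬ IsUnit (a * star a) := by
        by_contra hcon
        push_neg at hcon
        apply hna
        obtain ⟨u, hu1, hu2⟩ := isUnit_iff_exists.mp hcon.1
        obtain ⟨v, hv1, hv2⟩ := isUnit_iff_exists.mp hcon.2
        have hl : (u * star a) * a = 1 := by rw [mul_assoc]; exact hu2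
        have hrv : a * (star a * v) = 1 := by rw [← mul_assoc]; exact hv1
        have heq : u * star a = star a * v := by
          calc u * star a = (u * star a) * (a * (star a * v)) := by rw [hrv, mul_one]
          _ = ((u * star a) * a) * (star a * v) := by simp only [mul_assoc]
          _ = star a * v := by rw [hl, one_mul]
        exact isUnit_iff_exists.mpr ⟨star a * v, hrv, by rw [← heq, hl]⟩
      rcases h2 with hc | hc
      · obtain ⟨i, hi⟩ := key (star a * a) spectrum_star_mul_self_nonneg
          (IsSelfAdjoint.star_mul_self a) hc
        exact hi (by rw [map_mul, map_star]; exact (h i).star.mul (h i))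
      · obtain ⟨i, hi⟩ := key (a * star a)
          (by
            intro x hx
            rw [show a * star a = star (star a) * star a by rw [star_star]] at hx
            exact spectrum_star_mul_self_nonneg x hx)
          (IsSelfAdjoint.mul_star_self a) hc
        exact hi (by rw [map_mul, map_star]; exact (h i).mul (h i).star)
  · intro hspec a
    by_cases ha0 : a = 0
    · have h0 : ¬ IsUnit (0 : A) := not_isUnit_zero
      have : ¬ ∀ i, IsUnit (φ i (0 : A)) := fun hc => h0 ((hspec 0).mpr hc)
      push_neg at this
      obtain ⟨i, -⟩ := this
      exact ⟨i, by simp [ha0]⟩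
    · set c := star a * a with hc
      have hcnorm : ‖c‖ = ‖a‖ * ‖a‖ := CStarRing.norm_star_mul_self
      have hcsa : IsSelfAdjoint c := IsSelfAdjoint.star_mul_self a
      have hcnz : 0 < ‖c‖ := by
        rw [hcnorm]
        have := norm_pos_iff.mpr ha0
        positivity
      have hmem : ‖c‖ ∈ spectrum ℝ c := by
        rcases CStarAlgebra.norm_or_neg_norm_mem_spectrum hcsa with hmem | hmem
        · exact hmem
        · exfalso
          have := spectrum_star_mul_self_nonneg _ hmem
          linarith
      have hdu : ¬ IsUnit (algebraMap ℝ A ‖c‖ - c) := spectrum.mem_iff.mp hmem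
      obtain ⟨i, hdi⟩ : ∃ i, ¬ IsUnit (φ i (algebraMap ℝ A ‖c‖ - c)) := by
        by_contra hcon
        push_neg at hcon
        exact hdu ((hspec _).mpr hcon)
      haveI : Nontrivial (H i) := by
        by_contra hnt
        rw [not_nontrivial_iff_subsingleton] at hnt
        exact hdi (isUnit_of_subsingleton _)
      refine ⟨i, ?_⟩
      have hφd : φ i (algebraMap ℝ A ‖c‖ - c)
          = algebraMap ℝ (H i →L[ℂ] H i) ‖c‖ - φ i c := by
        rw [map_sub, hcomm]
      rw [hφd] at hdi
      have h0 : ‖c‖ ∈ spectrum ℝ (φ i c) := spectrum.mem_iff.mpr hdi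
      have hge : ‖c‖ ≤ ‖φ i c‖ := by
        have := spectrum.norm_le_norm_of_mem h0
        rwa [Real.norm_eq_abs, abs_of_pos hcnz] at this
      have hle : ‖φ i c‖ ≤ ‖c‖ := NonUnitalStarAlgHom.norm_apply_le (φ i) c
      have heq : ‖φ i c‖ = ‖c‖ := le_antisymm hle hge
      have hsq : ‖φ i a‖ * ‖φ i a‖ = ‖a‖ * ‖a‖ := by
        rw [← CStarRing.norm_star_mul_self (x := φ i a), ← map_star, ← map_mul, ← hc, heq,
          hcnorm]
      exact (mul_self_inj (norm_nonneg _) (norm_nonneg _)).mp hsq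
end

section
/- Let A be a unital C*-algebra, I ⊆ A a closed two-sided ideal, and F_I a strictly spectral set of nondegenerate representations of I (extended to A). Then for a ∈ A: a is invertible in A if and only if the image of a in A/I is invertible and φ(a) is invertible for every φ ∈ F_I. -/
set_option maxHeartbeats 1000000


open scoped CStarAlgebra in
/-- Let `A` be a unital C*-algebra, `I` a closed two-sided ideal (the kernel of the
quotient map `p : A → B = A/I`), and `F_I` a strictly spectral set of nondegenerate
representations of `I`, extended to `A`.  Then `a ∈ A` is invertible iff its image in
`A/I` is invertible and `φ a` is invertible for every `φ ∈ F_I`. -/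
theorem isUnit_iff_quotient_and_ideal_reps
    (A B : Type) [CStarAlgebra A] [CStarAlgebra B]
    (I : Set A) (hIclosed : IsClosed I)
    (hIideal : ∀ a : A, ∀ x ∈ I, a * x ∈ I ∧ x * a ∈ I)
    (p : A →⋆ₐ[ℂ] B) (hp : Function.Surjective p) (hker : {a : A | p a = 0} = I)
    {κ : Type} (H : κ → Type)
    [∀ k, NormedAddCommGroup (H k)] [∀ k, InnerProductSpace ℂ (H k)]
    [∀ k, CompleteSpace (H k)]
    (φ : ∀ k, A →⋆ₐ[ℂ] (H k →L[ℂ] H k))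
    -- each `φ k` restricts to a nondegenerate representation of `I`
    (hnd : ∀ k, Dense ((Submodule.span ℂ
      {x : H k | ∃ a ∈ I, ∃ ξ : H k, φ k a ξ = x} : Submodule ℂ (H k)) : Set (H k)))
    -- the family is strictly spectral for `I`: for `x ∈ I`, `1 + x` is invertible iff
    -- `1 + φ k x` is invertible for all `k`
    (hss : ∀ x ∈ I, (IsUnit (1 + x) ↔ ∀ k, IsUnit (1 + φ k x))) :
    ∀ a : A, IsUnit a ↔ (IsUnit (p a) ∧ ∀ k, IsUnit (φ k a)) := by
  have key : ∀ h : A, IsSelfAdjoint h → (∀ t ∈ spectrum ℝ (p h), (0:ℝ) ≤ t) →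
      IsUnit (p h) → (∀ k, IsUnit (φ k h)) → IsUnit h := by
    intro h hsa hppos hph hφh
    -- spectrum of `p h` is closed and avoids 0
    have h0 : (0 : ℝ) ∉ spectrum ℝ (p h) := spectrum.zero_notMem ℝ hph
    have hcl : IsClosed (spectrum ℝ (p h)) := spectrum.isClosed _
    obtain ⟨δ, hδpos, hδ⟩ : ∃ δ > 0, Metric.ball (0 : ℝ) δ ⊆ (spectrum ℝ (p h))ᶜ :=
      Metric.isOpen_iff.mp hcl.isOpen_compl 0 h0
    set g : ℝ → ℝ := fun t => max (δ - t) 0 with hg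
    have hgc : Continuous g := by fun_prop
    set z : A := cfc g h with hz
    have hpz : p z = 0 := by
      have h1 : p z = cfc g (p h) := StarAlgHom.map_cfc p g h
      rw [h1, show cfc g (p h) = cfc (0 : ℝ → ℝ) (p h) from cfc_congr ?_, cfc_zero]
      intro t ht
      have htpos : 0 ≤ t := hppos t ht
      have : ¬ t ∈ Metric.ball (0 : ℝ) δ := fun hb => hδ hb ht
      rw [Real.ball_eq_Ioo] at this
      simp only [Set.mem_Ioo, not_and_or, not_lt] at this
      have hδt : δ ≤ t := by
        rcases this with h' | h' <;> [linarith; linarith]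
      simp [hg, sub_nonpos.mpr hδt, Pi.zero_apply]
    have hzI : z ∈ I := hker ▸ hpz
    -- h + z is invertible
    have hhz : h + z = cfc (fun t => t + g t) h := by
      have := cfc_add (a := h) (fun t : ℝ => t) g (by fun_prop) (by fun_prop)
      rw [this, cfc_id' ℝ h]
    have hu : IsUnit (h + z) := by
      rw [hhz]
      refine spectrum.isUnit_of_zero_notMem ℝ ?_
      rw [cfc_map_spectrum (R := ℝ) (a := h) (f := fun t => t + g t) hsa
        ((continuous_id.add hgc).continuousOn)]
      rintro ⟨t, -, ht⟩
      simp only at ht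
      have : δ ≤ t + g t := by
        simp only [hg]
        rcases le_total t δ with h' | h' <;> [simp [max_eq_left (by linarith : (0:ℝ) ≤ δ - t)];
          simp [max_eq_right (by linarith : δ - t ≤ 0)]] <;> linarith
      linarith
    set v : A := ↑hu.unit⁻¹ with hv
    have hvu : v * (h + z) = 1 := hu.val_inv_mul
    have huv : (h + z) * v = 1 := hu.mul_val_inv
    set x : A := (-v) * z with hx
    have hxI : x ∈ I := (hIideal (-v) z hzI).1
    have h1x : 1 + x = v * h := by
      rw [hx, neg_mul, ← hvu, mul_add, add_neg_cancel_right]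
    have hunit1x : IsUnit (1 + x) := by
      refine (hss x hxI).mpr fun k => ?_
      have : (1 : H k →L[ℂ] H k) + φ k x = φ k (1 + x) := by simp
      rw [this, h1x, map_mul]
      have hφv : IsUnit (φ k v) := by
        refine isUnit_iff_exists.mpr ⟨φ k (h + z), ?_, ?_⟩
        · rw [← map_mul, hvu, map_one]
        · rw [← map_mul, huv, map_one]
      exact hφv.mul (hφh k)
    have : h = (h + z) * (1 + x) := by
      rw [h1x, ← mul_assoc, huv, one_mul]
    rw [this]
    exact hu.mul hunit1x
  intro a
  constructor
  · intro ha
    exact ⟨ha.map p, fun k => ha.map (φ k)⟩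
  · rintro ⟨hpa, hφa⟩
    have h1 : IsUnit (star a * a) := by
      refine key _ (IsSelfAdjoint.star_mul_self a) ?_ ?_ fun k => ?_
      · rw [map_mul, map_star]; exact spectrum_star_mul_self_nonneg
      · rw [map_mul, map_star]; exact (hpa.star).mul hpa
      · rw [map_mul, map_star]; exact ((hφa k).star).mul (hφa k)
    have h2 : IsUnit (a * star a) := by
      refine key _ (IsSelfAdjoint.mul_star_self a) ?_ ?_ fun k => ?_
      · rw [map_mul, map_star]
        intro t ht
        exact spectrum_star_mul_self_nonneg (b := star (p a)) t (by rwa [star_star])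
      · rw [map_mul, map_star]; exact hpa.mul hpa.star
      · rw [map_mul, map_star]; exact (hφa k).mul (hφa k).star
    refine isUnit_iff_exists.mpr ?_
    set b : A := ↑h1.unit⁻¹ * star a with hb
    set c : A := star a * ↑h2.unit⁻¹ with hc
    have hba : b * a = 1 := by
      rw [hb, mul_assoc]
      exact h1.val_inv_mul
    have hac : a * c = 1 := by
      rw [hc, ← mul_assoc]
      exact h2.mul_val_inv
    have hbc : b = c := by
      calc b = b * (a * c) := by rw [hac, mul_one]
      _ = (b * a) * c := (mul_assoc b a c).symm
      _ = c := by rw [hba, one_mul]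
    exact ⟨b, by rw [hbc, hac], hba⟩
end

section
/- Let A be a C*-algebra and F a set of representations. F is exhaustive for A if and only if the family F_n := {φ ⊗ 1 : φ ∈ F} of representations of M_n(A) is exhaustive for M_n(A). -/
/-!
Both directions realise the homeomorphism `Prim(A) ≅ Prim(Mₙ(A))` on representations. An
irreducible representation `π` of `A` ampliates to an irreducible representation `π ⊗ 1` of
`Mₙ(A)` on `Hⁿ`, and `a ∈ ker π` iff `e₀₀ ⊗ a ∈ ker (π ⊗ 1)`. Conversely, an irreducible
representation `ρ` of `Mₙ(A)` compresses to the irreducible representation `a ↦ ρ (e₀₀ ⊗ a)` of `A`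
on the closed span of the ranges of the `ρ (e₀ₖ ⊗ c)`, and by the C*-identity `ρ M = 0` as soon
as this compression kills every entry of `M`. Since `ker (φ ⊗ 1)` consists of the matrices with
all entries in `ker φ`, containment of kernels transfers in both directions.
-/

set_option synthInstance.maxHeartbeats 400000

/-- The `L²` product of finitely many complete spaces is complete (its uniformity is
definitionally the product uniformity). -/
instance piLp_completeSpace {n : ℕ} (G : Fin n → Type)
    [∀ j, NormedAddCommGroup (G j)] [∀ j, CompleteSpace (G j)] :
    CompleteSpace (PiLp 2 G) :=
  inferInstance

/-- A primitive ideal of `A`: the kernel of a (topologically) irreducible representation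
of `A` on a nonzero Hilbert space. -/
def IsPrimitiveIdeal (A : Type) [NonUnitalRing A] [Module ℂ A] [Star A] (P : Set A) : Prop :=
  ∃ (H : Type) (_ : NormedAddCommGroup H) (_ : InnerProductSpace ℂ H) (_ : CompleteSpace H)
    (π : A →⋆ₙₐ[ℂ] (H →L[ℂ] H)),
    Nontrivial H ∧ (∀ ξ : H, ξ ≠ 0 → Dense (Set.range fun a : A => π a ξ)) ∧
    P = {a : A | π a = 0}

open Matrix

section Irreducible

variable {B K : Type*} [NonUnitalNonAssocSemiring B] [Module ℂ B] [Star B]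
  [NormedAddCommGroup K] [InnerProductSpace ℂ K] [CompleteSpace K]

def IsIrreducibleRep (π : B →⋆ₙₐ[ℂ] (K →L[ℂ] K)) : Prop :=
  ∀ ξ : K, ξ ≠ 0 → Dense (Set.range fun b => π b ξ)

lemma IsIrreducibleRep.exists_ne_zero [Nontrivial K] {π : B →⋆ₙₐ[ℂ] (K →L[ℂ] K)}
    (hπ : IsIrreducibleRep π) : ∃ b, π b ≠ 0 := by
  obtain ⟨ξ, hξ⟩ := exists_ne (0 : K)
  by_contra! h
  have hdense : Dense ({0} : Set K) :=
    (hπ ξ hξ).mono (Set.range_subset_iff.2 fun b => by simp [h b])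
  exact hξ (by simpa using hdense ξ)

end Irreducible

lemma isPrimitiveIdeal_ker {B K : Type} [NonUnitalRing B] [Module ℂ B] [Star B]
    [NormedAddCommGroup K] [InnerProductSpace ℂ K] [CompleteSpace K] [Nontrivial K]
    {π : B →⋆ₙₐ[ℂ] (K →L[ℂ] K)} (hπ : IsIrreducibleRep π) :
    IsPrimitiveIdeal B {b | π b = 0} :=
  ⟨K, _, _, _, π, ‹_›, hπ, rfl⟩

section OperatorMatrix

variable {𝕜 ι E : Type*} [NormedField 𝕜] [Fintype ι] [DecidableEq ι]
  [SeminormedAddCommGroup E] [NormedSpace 𝕜 E]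

lemma eq_zero_iff_forall_entry_eq_zero
    {T : PiLp 2 (fun _ : ι => E) →L[𝕜] PiLp 2 (fun _ : ι => E)} {S : ι → ι → E →L[𝕜] E}
    (hT : ∀ ξ j, T ξ j = ∑ k, S j k (ξ k)) :
    T = 0 ↔ ∀ j k, S j k = 0 := by
  constructor
  · intro h j k
    ext v
    simpa [h, Pi.apply_single (fun x => S j x) (fun _ => map_zero _)] using
      (hT (WithLp.toLp 2 (Pi.single k v)) j).symm
  · intro h
    ext ξ j
    simp [hT, h]

end OperatorMatrix

section Ampliation

variable {A H ι : Type*} [NonUnitalNonAssocSemiring A] [Module ℂ A] [Star A]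
  [NormedAddCommGroup H] [InnerProductSpace ℂ H] [CompleteSpace H] [Fintype ι]

variable (ι) in
noncomputable def ampliation (π : A →⋆ₙₐ[ℂ] (H →L[ℂ] H)) :
    Matrix ι ι A →⋆ₙₐ[ℂ] (PiLp 2 (fun _ : ι => H) →L[ℂ] PiLp 2 (fun _ : ι => H)) where
  toFun M := (PiLp.continuousLinearEquiv 2 ℂ _).symm.toContinuousLinearMap ∘L
    (ContinuousLinearMap.pi fun j => ∑ k, π (M j k) ∘L ContinuousLinearMap.proj k) ∘L
    (PiLp.continuousLinearEquiv 2 ℂ _).toContinuousLinearMap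
  map_zero' := by ext; simp
  map_add' M N := by ext; simp [Finset.sum_add_distrib]
  map_smul' c M := by ext; simp [Finset.smul_sum]
  map_mul' M N := by
    ext ξ j
    simpa [Matrix.mul_apply, map_sum] using Finset.sum_comm
  map_star' M := by
    rw [ContinuousLinearMap.star_eq_adjoint, ContinuousLinearMap.eq_adjoint_iff]
    intro ξ η
    simp [PiLp.inner_apply, Matrix.star_apply, sum_inner, inner_sum, map_star,
      ContinuousLinearMap.star_eq_adjoint, ContinuousLinearMap.adjoint_inner_left]
    exact Finset.sum_comm

lemma ampliation_apply (π : A →⋆ₙₐ[ℂ] (H →L[ℂ] H)) (M : Matrix ι ι A)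
    (ξ : PiLp 2 (fun _ : ι => H)) (j : ι) :
    ampliation ι π M ξ j = ∑ k, π (M j k) (ξ k) := by
  simp [ampliation]

variable [DecidableEq ι]

lemma ampliation_single_apply (π : A →⋆ₙₐ[ℂ] (H →L[ℂ] H)) (j k : ι) (a : A)
    (ξ : PiLp 2 (fun _ : ι => H)) :
    ampliation ι π (single j k a) ξ = PiLp.single 2 j (π a (ξ k)) := by
  ext m
  by_cases hm : m = j
  · subst hm
    rw [ampliation_apply, Finset.sum_eq_single k (fun x _ hx => by simp [Ne.symm hx]) (by simp)]
    simp
  · simp [ampliation_apply, hm, Ne.symm hm]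

lemma isIrreducibleRep_ampliation {π : A →⋆ₙₐ[ℂ] (H →L[ℂ] H)} (hπ : IsIrreducibleRep π) :
    IsIrreducibleRep (ampliation ι π) := by
  intro ξ hξ
  obtain ⟨k₀, hk₀⟩ : ∃ k, ξ k ≠ 0 := by
    by_contra! h
    exact hξ (PiLp.ext h)
  let ℓ : Matrix ι ι A →ₗ[ℂ] PiLp 2 (fun _ : ι => H) :=
    { toFun M := ampliation ι π M ξ
      map_add' M N := by simp
      map_smul' c M := by simp }
  change Dense (LinearMap.range ℓ : Set (PiLp 2 (fun _ : ι => H)))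
  rw [Submodule.dense_iff_topologicalClosure_eq_top, Submodule.eq_top_iff']
  have hsingle : ∀ j v, PiLp.single 2 j v ∈ (LinearMap.range ℓ).topologicalClosure := by
    intro j v
    refine map_mem_closure
      ((PiLp.continuous_toLp 2 _).comp (continuous_single (A := fun _ : ι => H) j))
      (hπ _ hk₀ v) ?_
    rintro _ ⟨a, rfl⟩
    exact ⟨single j k₀ a, ampliation_single_apply π j k₀ a ξ⟩
  intro η
  rw [← WithLp.toLp_ofLp 2 η, ← Finset.univ_sum_single (WithLp.ofLp η), WithLp.toLp_sum]
  exact Submodule.sum_mem _ fun j _ => hsingle j _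

end Ampliation

section Corner

variable {A K ι : Type*} [NonUnitalRing A] [StarRing A] [Module ℂ A] [Fintype ι] [DecidableEq ι]
  [NormedAddCommGroup K] [InnerProductSpace ℂ K] [CompleteSpace K]
  (ρ : Matrix ι ι A →⋆ₙₐ[ℂ] (K →L[ℂ] K))

lemma map_single_eq_zero_iff_star_mul (j k : ι) (a : A) :
    ρ (single j k a) = 0 ↔ ρ (single k k (star a * a)) = 0 := by
  rw [← CStarRing.star_mul_self_eq_zero_iff, ← map_star, ← map_mul, star_eq_conjTranspose,
    conjTranspose_single, single_mul_single_same]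

lemma map_single_eq_zero_iff_mul_star (j k : ι) (a : A) :
    ρ (single j k a) = 0 ↔ ρ (single j j (a * star a)) = 0 := by
  rw [← CStarRing.mul_star_self_eq_zero_iff, ← map_star, ← map_mul, star_eq_conjTranspose,
    conjTranspose_single, single_mul_single_same]

variable (z : ι)

def cornerSpace : Submodule ℂ K :=
  (Submodule.span ℂ {ρ (single z k c) w | (k : ι) (c : A) (w : K)}).topologicalClosure

instance : CompleteSpace (cornerSpace ρ z) :=
  (Submodule.isClosed_topologicalClosure _).completeSpace_coe

lemma apply_mem_cornerSpace (k : ι) (c : A) (w : K) : ρ (single z k c) w ∈ cornerSpace ρ z :=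
  Submodule.le_topologicalClosure _ (Submodule.subset_span ⟨k, c, w, rfl⟩)

noncomputable def cornerRep : A →⋆ₙₐ[ℂ] (cornerSpace ρ z →L[ℂ] cornerSpace ρ z) where
  toFun a := (ρ (single z z a)).restrict fun x _ => apply_mem_cornerSpace ρ z z a x
  map_zero' := by ext; simp
  map_add' a b := by ext; simp [single_add]
  map_smul' c a := by ext; simp [← smul_single]
  map_mul' a b := by
    ext x
    simp only [ContinuousLinearMap.coe_restrict_apply, mul_apply_eq_comp]
    rw [← mul_apply_eq_comp, ← map_mul, single_mul_single_same]
  map_star' a := by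
    rw [ContinuousLinearMap.star_eq_adjoint, ContinuousLinearMap.eq_adjoint_iff]
    intro x y
    simp only [Submodule.coe_inner, ContinuousLinearMap.coe_restrict_apply]
    rw [← conjTranspose_single, ← star_eq_conjTranspose, map_star,
      ContinuousLinearMap.star_eq_adjoint, ContinuousLinearMap.adjoint_inner_left]

lemma cornerRep_apply (a : A) (x : cornerSpace ρ z) :
    (cornerRep ρ z a x : K) = ρ (single z z a) x :=
  rfl

/-- `T = ρ (single z z b)` maps `K` into the corner space, on which
`star T = ρ (single z z (star b))` vanishes; hence `star T * T = 0`. -/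
lemma map_single_eq_zero_of_cornerRep_eq_zero {b : A} (hb : cornerRep ρ z b = 0) :
    ρ (single z z b) = 0 := by
  have hb' : cornerRep ρ z (star b) = 0 := by
    rw [map_star, hb]
    exact star_zero (cornerSpace ρ z →L[ℂ] cornerSpace ρ z)
  have hstar : ∀ y ∈ cornerSpace ρ z, ρ (single z z (star b)) y = 0 := fun y hy => by
    rw [← cornerRep_apply ρ z _ ⟨y, hy⟩, hb']
    rfl
  rw [← CStarRing.star_mul_self_eq_zero_iff, ← map_star, star_eq_conjTranspose,
    conjTranspose_single]
  ext x
  exact hstar _ (apply_mem_cornerSpace ρ z z b x)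

lemma map_eq_zero_of_forall_cornerRep_eq_zero {M : Matrix ι ι A}
    (hM : ∀ j k, cornerRep ρ z (M j k) = 0) : ρ M = 0 := by
  rw [matrix_eq_sum_single M, map_sum]
  refine Finset.sum_eq_zero fun j _ => ?_
  rw [map_sum]
  refine Finset.sum_eq_zero fun k _ => ?_
  have hcorner : ρ (single z z (M j k * star (M j k))) = 0 :=
    map_single_eq_zero_of_cornerRep_eq_zero ρ z (by rw [map_mul, hM, zero_mul])
  rw [map_single_eq_zero_iff_star_mul, ← map_single_eq_zero_iff_star_mul ρ z,
    map_single_eq_zero_iff_mul_star]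
  exact hcorner

lemma cornerSpace_nontrivial [Nontrivial K] (hρ : IsIrreducibleRep ρ) :
    Nontrivial (cornerSpace ρ z) := by
  by_contra h
  rw [not_nontrivial_iff_subsingleton] at h
  obtain ⟨M, hM⟩ := hρ.exists_ne_zero
  exact hM (map_eq_zero_of_forall_cornerRep_eq_zero ρ z fun _ _ => Subsingleton.elim _ _)

lemma map_single_mul_apply_of_mem_cornerSpace (k : ι) (c : A) (M : Matrix ι ι A) {x : K}
    (hx : x ∈ cornerSpace ρ z) : ρ (single z k c * M) x = ρ (single z z (c * M k z)) x := by
  refine ContinuousLinearMap.eqOn_closure_span ?_ hx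
  rintro _ ⟨q, d, w, rfl⟩
  simp only [← mul_apply_eq_comp, ← map_mul, single_mul_mul_single, single_mul_single_same]

lemma isIrreducibleRep_cornerRep (hρ : IsIrreducibleRep ρ) :
    IsIrreducibleRep (cornerRep ρ z) := by
  intro η hη
  have hη' : (η : K) ≠ 0 := by simpa using hη
  let ℓ : A →ₗ[ℂ] K :=
    { toFun a := ρ (single z z a) η
      map_add' a b := by simp [single_add]
      map_smul' c a := by simp [← smul_single] }
  have hle : cornerSpace ρ z ≤ (LinearMap.range ℓ).topologicalClosure := by
    refine Submodule.topologicalClosure_minimal _ ?_ (Submodule.isClosed_topologicalClosure _)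
    rw [Submodule.span_le]
    rintro _ ⟨k, c, w, rfl⟩
    refine map_mem_closure (ρ (single z k c)).continuous (hρ _ hη' w) ?_
    rintro _ ⟨M, rfl⟩
    refine ⟨c * M k z, ?_⟩
    change ρ (single z z (c * M k z)) η = ρ (single z k c) (ρ M η)
    rw [← map_single_mul_apply_of_mem_cornerSpace ρ z k c M η.2, map_mul, mul_apply_eq_comp]
  intro x
  rw [closure_subtype, ← Set.range_comp]
  exact hle x.2

end Corner

/-- A family `F` of representations of a C*-algebra `A` is exhaustive for `A` iff the
family `F_n = {φ ⊗ 1}` of representations of `M_n(A)` (acting entrywise on `H^n`) is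
exhaustive for `M_n(A)`. -/
theorem exhaustive_iff_matrices
    (A : Type) [NonUnitalCStarAlgebra A] (n : ℕ) (hn : 0 < n)
    {ι : Type} (H : ι → Type)
    [∀ i, NormedAddCommGroup (H i)] [∀ i, InnerProductSpace ℂ (H i)]
    [∀ i, CompleteSpace (H i)]
    (φ : ∀ i, A →⋆ₙₐ[ℂ] (H i →L[ℂ] H i))
    -- `Φ i = φ i ⊗ 1`, acting entrywise on `H i ⊗ ℂⁿ ≅ (H i)ⁿ`
    (Φ : ∀ i, Matrix (Fin n) (Fin n) A →⋆ₙₐ[ℂ]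
      (PiLp 2 (fun _ : Fin n => H i) →L[ℂ] PiLp 2 (fun _ : Fin n => H i)))
    (hΦ : ∀ i (M : Matrix (Fin n) (Fin n) A) (ξ : PiLp 2 (fun _ : Fin n => H i)) (j : Fin n),
      (Φ i M) ξ j = ∑ k : Fin n, φ i (M j k) (ξ k)) :
    (∀ P : Set A, IsPrimitiveIdeal A P → ∃ i, {a : A | φ i a = 0} ⊆ P) ↔
    (∀ P : Set (Matrix (Fin n) (Fin n) A), IsPrimitiveIdeal (Matrix (Fin n) (Fin n) A) P →
      ∃ i, {M : Matrix (Fin n) (Fin n) A | Φ i M = 0} ⊆ P) := by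
  have : NeZero n := ⟨hn.ne'⟩
  constructor
  · rintro hA P ⟨K, _, _, _, ρ, hK, hρ, rfl⟩
    have := cornerSpace_nontrivial ρ 0 hρ
    obtain ⟨i, hi⟩ := hA _ (isPrimitiveIdeal_ker (isIrreducibleRep_cornerRep ρ 0 hρ))
    exact ⟨i, fun M hM => map_eq_zero_of_forall_cornerRep_eq_zero ρ 0 fun j k =>
      hi ((eq_zero_iff_forall_entry_eq_zero (hΦ i M)).1 hM j k)⟩
  · rintro hM P ⟨K, _, _, _, π, hK, hπ, rfl⟩
    obtain ⟨i, hi⟩ := hM _ (isPrimitiveIdeal_ker (isIrreducibleRep_ampliation (ι := Fin n) hπ))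
    refine ⟨i, fun a ha => ?_⟩
    have hΦa : Φ i (single 0 0 a) = 0 :=
      (eq_zero_iff_forall_entry_eq_zero (hΦ i _)).2 fun j k => by
        by_cases h : 0 = j ∧ 0 = k
        · obtain ⟨rfl, rfl⟩ := h
          simpa using ha
        · simp [h]
    simpa using (eq_zero_iff_forall_entry_eq_zero (ampliation_apply π _)).1 (hi hΦa) 0 0
end

section
/- Let A be a unital C*-algebra and F a strictly norming set of representations of A, i.e., for every a ∈ A there is φ ∈ F with ‖φ(a)‖ = ‖a‖. Then for every a ∈ A: if φ(a) is bounded below uniformly, in the sense that each φ(a) is invertible with ‖φ(a)⁻¹‖ ≤ C for a fixed constant C and all φ ∈ F, and similarly for a*, then a is invertible in A with ‖a⁻¹‖ ≤ C. -/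
/-!
A uniform bound `‖Tᵢ‖ ≤ C` on left inverses of `φᵢ a` gives `φᵢ (a⋆a) ≥ C⁻²` in every
representation. Since the family is strictly norming, order bounds of self-adjoint elements
transfer back to `A` (apply it to `t - a⋆a`, which is positive), so `a⋆a ≥ C⁻²`, and likewise
`aa⋆ ≥ C⁻²`. Hence `a⋆a` and `aa⋆` are invertible, so `a` is, and
`‖a⁻¹‖² = ‖(a⋆a)⁻¹‖ ≤ C²`.
-/

lemma isUnit_of_isUnit_mul_of_isUnit_mul {M : Type*} [Monoid M] {a b c : M}
    (hab : IsUnit (a * b)) (hca : IsUnit (c * a)) : IsUnit a := by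
  obtain ⟨d, hd⟩ := hab.exists_right_inv
  obtain ⟨e, he⟩ := hca.exists_left_inv
  exact isUnit_iff_exists_and_exists.2
    ⟨⟨b * d, by rw [← mul_assoc, hd]⟩, ⟨e * c, by rw [mul_assoc, he]⟩⟩

open scoped Ring

lemma ringInverse_algebraMap {R A : Type*} [Semifield R] [Semiring A] [Algebra R A] {r : R}
    (hr : r ≠ 0) : (algebraMap R A r)⁻¹ʳ = algebraMap R A r⁻¹ := by
  rw [eq_comm, ← one_mul (algebraMap R A r)⁻¹ʳ, Ring.eq_mul_inverse_iff_mul_eq _ _ _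
    ((isUnit_iff_ne_zero.2 hr).map _), ← map_mul, inv_mul_cancel₀ hr, map_one]

section
variable {A : Type*} [CStarAlgebra A] [PartialOrder A] [StarOrderedRing A]

lemma algebraMap_inv_sq_le_star_mul_self {S T : A} {C : ℝ} (hC : 0 < C) (hTS : T * S = 1)
    (hT : ‖T‖ ≤ C) : algebraMap ℝ A (C ^ 2)⁻¹ ≤ star S * S := by
  have hone : (1 : A) ≤ C ^ 2 • (star S * S) :=
    calc (1 : A) = star (T * S) * (T * S) := by simp [hTS]
      _ = star S * (star T * T) * S := by simp only [star_mul, mul_assoc]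
      _ ≤ star S * algebraMap ℝ A (‖T‖ ^ 2) * S :=
        star_left_conjugate_le_conjugate CStarAlgebra.star_mul_le_algebraMap_norm_sq S
      _ = ‖T‖ ^ 2 • (star S * S) := by simp [Algebra.algebraMap_eq_smul_one]
      _ ≤ C ^ 2 • (star S * S) := by gcongr; exact star_mul_self_nonneg S
  calc algebraMap ℝ A (C ^ 2)⁻¹ = (C ^ 2)⁻¹ • (1 : A) := Algebra.algebraMap_eq_smul_one _
    _ ≤ (C ^ 2)⁻¹ • C ^ 2 • (star S * S) := by gcongr
    _ = star S * S := by rw [smul_smul, inv_mul_cancel₀ (by positivity), one_smul]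

/-- With `t ≥ ‖z‖, r`, both `t - z` and `t - r` are positive, and for positive elements norm bounds
are order bounds; so `φ i (t - z) ≤ t - r` passes to `A` through an `i` with
`‖φ i (t - z)‖ = ‖t - z‖`. -/
lemma algebraMap_le_of_forall_algebraMap_le_map {ι : Type*} {B : ι → Type*}
    [∀ i, CStarAlgebra (B i)] [∀ i, PartialOrder (B i)] [∀ i, StarOrderedRing (B i)]
    (φ : ∀ i, A →⋆ₐ[ℂ] B i) (hφ : ∀ a, ∃ i, ‖φ i a‖ = ‖a‖) {z : A} (hz : IsSelfAdjoint z) {r : ℝ}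
    (h : ∀ i, algebraMap ℝ (B i) r ≤ φ i z) : algebraMap ℝ A r ≤ z := by
  set t := max ‖z‖ r
  have hb : 0 ≤ algebraMap ℝ A t - z :=
    sub_nonneg.2 (hz.le_algebraMap_norm_self.trans (algebraMap_mono _ (le_max_left _ _)))
  have htr : 0 ≤ t - r := sub_nonneg.2 (le_max_right _ _)
  have hφb (i) : ‖φ i (algebraMap ℝ A t - z)‖ ≤ t - r := by
    have hφt : φ i (algebraMap ℝ A t) = algebraMap ℝ (B i) t := (φ i).toAlgHom.map_algebraMap t
    rw [CStarAlgebra.norm_le_iff_le_algebraMap _ htr (map_nonneg _ hb), map_sub, hφt, map_sub]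
    exact sub_le_sub_left (h i) _
  obtain ⟨i, hi⟩ := hφ (algebraMap ℝ A t - z)
  have := (CStarAlgebra.norm_le_iff_le_algebraMap _ htr hb).1 (hi ▸ hφb i)
  rwa [map_sub, sub_le_sub_iff_left] at this

lemma norm_ringInverse_le_of_algebraMap_le {x : A} {r : ℝ} (hr : 0 < r)
    (h : algebraMap ℝ A r ≤ x) : ‖x⁻¹ʳ‖ ≤ r⁻¹ := by
  have hr' : IsStrictlyPositive (algebraMap ℝ A r) := isStrictlyPositive_algebraMap hr
  rw [CStarAlgebra.norm_le_iff_le_algebraMap _ (by positivity) (hr'.of_le h).ringInverse.nonneg,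
    ← ringInverse_algebraMap hr.ne']
  exact CStarAlgebra.ringInverse_le_ringInverse h

lemma isUnit_and_norm_ringInverse_le {a : A} {C : ℝ} (hC : 0 < C)
    (h₁ : algebraMap ℝ A (C ^ 2)⁻¹ ≤ star a * a) (h₂ : algebraMap ℝ A (C ^ 2)⁻¹ ≤ a * star a) :
    IsUnit a ∧ ‖a⁻¹ʳ‖ ≤ C := by
  have hpos : IsStrictlyPositive (algebraMap ℝ A (C ^ 2)⁻¹) :=
    isStrictlyPositive_algebraMap (by positivity)
  have ha : IsUnit a := isUnit_of_isUnit_mul_of_isUnit_mul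
    (CStarAlgebra.isUnit_of_le _ h₂ hpos) (CStarAlgebra.isUnit_of_le _ h₁ hpos)
  refine ⟨ha, pow_le_pow_iff_left₀ (norm_nonneg _) hC.le two_ne_zero |>.1 ?_⟩
  calc ‖a⁻¹ʳ‖ ^ 2 = ‖(star a * a)⁻¹ʳ‖ := by
        rw [Ring.inverse_mul (.inr ha), Ring.inverse_star, CStarRing.norm_self_mul_star, sq]
    _ ≤ C ^ 2 := by simpa using norm_ringInverse_le_of_algebraMap_le (by positivity) h₁

end

/-- Let `F` be a strictly norming set of representations of a unital C*-algebra `A`.  If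
for some `a ∈ A` each `φ a` and each `φ (star a)` is invertible with inverse of norm at
most `C`, then `a` is invertible in `A` with `‖a⁻¹‖ ≤ C`. -/
theorem isUnit_of_uniformly_invertible
    (A : Type) [CStarAlgebra A]
    {ι : Type} (H : ι → Type)
    [∀ i, NormedAddCommGroup (H i)] [∀ i, InnerProductSpace ℂ (H i)]
    [∀ i, CompleteSpace (H i)]
    (φ : ∀ i, A →⋆ₐ[ℂ] (H i →L[ℂ] H i))
    (hnorm : ∀ a : A, ∃ i, ‖φ i a‖ = ‖a‖)
    (C : ℝ) (hC : 0 < C) (a : A)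
    (ha : ∀ i, ∃ T : H i →L[ℂ] H i, φ i a * T = 1 ∧ T * φ i a = 1 ∧ ‖T‖ ≤ C)
    (hastar : ∀ i, ∃ T : H i →L[ℂ] H i,
      φ i (star a) * T = 1 ∧ T * φ i (star a) = 1 ∧ ‖T‖ ≤ C) :
    ∃ b : A, a * b = 1 ∧ b * a = 1 ∧ ‖b‖ ≤ C := by
  let := CStarAlgebra.spectralOrder A
  have := CStarAlgebra.spectralOrderedRing A
  have lower_bound (x : A)
      (hx : ∀ i, ∃ T : H i →L[ℂ] H i, φ i x * T = 1 ∧ T * φ i x = 1 ∧ ‖T‖ ≤ C) :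
      algebraMap ℝ A (C ^ 2)⁻¹ ≤ star x * x := by
    refine algebraMap_le_of_forall_algebraMap_le_map φ hnorm (.star_mul_self x) fun i ↦ ?_
    obtain ⟨T, -, hT, hTC⟩ := hx i
    rw [map_mul, map_star]
    exact algebraMap_inv_sq_le_star_mul_self hC hT hTC
  obtain ⟨hunit, hinv⟩ := isUnit_and_norm_ringInverse_le hC (lower_bound a ha)
    (by simpa using lower_bound (star a) hastar)
  exact ⟨a⁻¹ʳ, Ring.mul_inverse_cancel a hunit, Ring.inverse_mul_cancel a hunit, hinv⟩
end

section
/- Let 0 → I → A → A/I → 0 be an extension of C*-algebras (I a closed two-sided ideal of A), and suppose a filtration of closed ideals 0 = I₋₁ ⊆ I₀ ⊆ ... ⊆ I_N = A is given such that each subquotient I_k/I_{k-1} admits an exhaustive family F_k of nondegenerate representations (extended/lifted to representations of A). Then F := ⋃_k F_k is an exhaustive family of representations of A. -/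
/-- Let `⊥ = J 0 ⊆ J 1 ⊆ ... ⊆ J N = ⊤` be a filtration of a C*-algebra `A` by closed
two-sided ideals.  Suppose for each `k < N` a family `F k` of representations of `A`
(lifted from the subquotient `J (k+1) / J k`) is exhaustive for that subquotient: every
primitive ideal `P` of `A` with `J k ⊆ P` and `J (k+1) ⊄ P` contains the kernel of some
member of `F k`.  Then `F = ⋃ k, F k` is an exhaustive family of representations of `A`. -/
theorem exhaustive_of_filtration
    (A : Type) [NonUnitalCStarAlgebra A]
    (N : ℕ) (J : ℕ → TwoSidedIdeal A) (hmono : Monotone J)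
    (hbot : J 0 = ⊥) (htop : J N = ⊤) (hclosed : ∀ k, IsClosed (J k : Set A))
    {ι : ℕ → Type} (H : ∀ k, ι k → Type)
    [∀ k i, NormedAddCommGroup (H k i)] [∀ k i, InnerProductSpace ℂ (H k i)]
    [∀ k i, CompleteSpace (H k i)]
    (φ : ∀ k (i : ι k), A →⋆ₙₐ[ℂ] (H k i →L[ℂ] H k i))
    -- each `F k` comes from nondegenerate representations of the ideal `J (k+1)`
    (hnd : ∀ k, k < N → ∀ i, Dense ((Submodule.span ℂ
      {x : H k i | ∃ a ∈ J (k+1), ∃ ξ : H k i, φ k i a ξ = x} : Submodule ℂ (H k i)) :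
        Set (H k i)))
    (hFk : ∀ k, k < N → ∀ P : Set A, IsPrimitiveIdeal A P →
      (J k : Set A) ⊆ P → ¬ (J (k+1) : Set A) ⊆ P →
      ∃ i, {a : A | φ k i a = 0} ⊆ P) :
    ∀ P : Set A, IsPrimitiveIdeal A P → ∃ k, k < N ∧ ∃ i, {a : A | φ k i a = 0} ⊆ P := by
  intro P hP
  -- P is proper
  have hproper : ¬ (Set.univ : Set A) ⊆ P := by
    obtain ⟨Hs, _, _, _, π, hnt, hcyc, hPeq⟩ := hP
    intro hsub
    obtain ⟨ξ, hξ⟩ := exists_ne (0 : Hs)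
    have hall : ∀ a : A, π a = 0 := by
      intro a
      have := hsub (Set.mem_univ a); rw [hPeq] at this; exact this
    have hd := hcyc ξ hξ
    have : Set.range (fun a : A => π a ξ) = {0} := by
      ext x; simp [hall]
    rw [this] at hd
    obtain ⟨η, hη⟩ := exists_ne (0 : Hs)
    have : η ∈ closure ({0} : Set Hs) := hd η
    simp at this
    exact hη this
  have h0 : (J 0 : Set A) ⊆ P := by
    rw [hbot]
    intro a ha
    have : a = 0 := by simpa using ha
    subst this
    obtain ⟨Hs, _, _, _, π, hnt, hcyc, hPeq⟩ := hP
    rw [hPeq]; simp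
  have hN : ¬ (J N : Set A) ⊆ P := by
    rw [htop]
    intro h
    exact hproper (by intro a _; exact h (by simp))
  have hex : ∃ m, ¬ (J m : Set A) ⊆ P := ⟨N, hN⟩
  classical
  set k := Nat.find hex with hk
  have hknot : ¬ (J k : Set A) ⊆ P := Nat.find_spec hex
  have hkpos : 0 < k := by
    rcases Nat.eq_zero_or_pos k with h | h
    · exact absurd (h ▸ h0) hknot
    · exact h
  have hkle : k ≤ N := Nat.find_le hN
  have hprev : (J (k - 1) : Set A) ⊆ P := by
    by_contra hc
    have h2 : k ≤ k - 1 := Nat.find_le hc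
    omega
  have hlt : k - 1 < N := by omega
  obtain ⟨i, hi⟩ := hFk (k - 1) hlt P hP hprev (by
    have : k - 1 + 1 = k := by omega
    rw [this]; exact hknot)
  exact ⟨k - 1, hlt, i, hi⟩
end
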